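/- The logic L = S4.1 ∗ S4 + ◇₁□₂(◇₁p → □₁p) has the finite model property: every bimodal formula A ∉ L is refuted in some finite Kripke 2-frame validating L; equivalently, L is the logic of the class of finite Kripke 2-frames validating L. -/

import Mathlib

/- ============== Formulas ============== -/

/-- Unimodal formulas. -/
inductive MForm : Type
  | var : ℕ → MForm
  | bot : MForm
  | imp : MForm → MForm → MForm
  | box : MForm → MForm

namespace MForm
def neg (A : MForm) : MForm := A.imp .bot
def dia (A : MForm) : MForm := (MForm.box A.neg).neg
def subst (σ : ℕ → MForm) : MForm → MForm
  | var n => σ n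
  | bot => bot
  | imp A B => (subst σ A).imp (subst σ B)
  | box A => MForm.box (subst σ A)
end MForm

/-- Bimodal formulas (`box 0` is □₁ and `box 1` is □₂). -/
inductive BForm : Type
  | var : ℕ → BForm
  | bot : BForm
  | imp : BForm → BForm → BForm
  | box : Fin 2 → BForm → BForm

namespace BForm
def neg (A : BForm) : BForm := A.imp .bot
def dia (i : Fin 2) (A : BForm) : BForm := (BForm.box i A.neg).neg
def subst (σ : ℕ → BForm) : BForm → BForm
  | var n => σ n
  | bot => bot
  | imp A B => (subst σ A).imp (subst σ B)
  | box i A => BForm.box i (subst σ A)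
end BForm

/-- Translation of a unimodal formula into the bimodal language,
reading □ as □ᵢ. -/
def MForm.toB (i : Fin 2) : MForm → BForm
  | .var n => .var n
  | .bot => .bot
  | .imp A B => (MForm.toB i A).imp (MForm.toB i B)
  | .box A => BForm.box i (MForm.toB i A)

/- ============== Normal modal logics ============== -/

/-- Provability in the smallest normal unimodal logic containing the axioms `Ax`:
classical tautologies (via a Hilbert axiomatization), the normality axiom,
modus ponens, necessitation and uniform substitution. -/
inductive MProv (Ax : Set MForm) : MForm → Prop
  | axm {A : MForm} : A ∈ Ax → MProv Ax A
  | pl1 {A B : MForm} : MProv Ax (A.imp (B.imp A))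
  | pl2 {A B C : MForm} : MProv Ax ((A.imp (B.imp C)).imp ((A.imp B).imp (A.imp C)))
  | pl3 {A : MForm} : MProv Ax ((A.neg.neg).imp A)
  | kax {A B : MForm} : MProv Ax ((MForm.box (A.imp B)).imp ((MForm.box A).imp (MForm.box B)))
  | mp {A B : MForm} : MProv Ax (A.imp B) → MProv Ax A → MProv Ax B
  | nec {A : MForm} : MProv Ax A → MProv Ax (MForm.box A)
  | subst {A : MForm} (σ : ℕ → MForm) : MProv Ax A → MProv Ax (A.subst σ)

/-- Provability in the smallest normal bimodal logic containing the axioms `Ax`. -/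
inductive BProv (Ax : Set BForm) : BForm → Prop
  | axm {A : BForm} : A ∈ Ax → BProv Ax A
  | pl1 {A B : BForm} : BProv Ax (A.imp (B.imp A))
  | pl2 {A B C : BForm} : BProv Ax ((A.imp (B.imp C)).imp ((A.imp B).imp (A.imp C)))
  | pl3 {A : BForm} : BProv Ax ((A.neg.neg).imp A)
  | kax (i : Fin 2) {A B : BForm} :
      BProv Ax ((BForm.box i (A.imp B)).imp ((BForm.box i A).imp (BForm.box i B)))
  | mp {A B : BForm} : BProv Ax (A.imp B) → BProv Ax A → BProv Ax B
  | nec (i : Fin 2) {A : BForm} : BProv Ax A → BProv Ax (BForm.box i A)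
  | subst {A : BForm} (σ : ℕ → BForm) : BProv Ax A → BProv Ax (A.subst σ)

/-- The propositional letter p. -/
def pM : MForm := .var 0

/-- Axioms of S4 : □p→p and □p→□□p. -/
def S4Ax : Set MForm := {(MForm.box pM).imp pM, (MForm.box pM).imp (MForm.box (MForm.box pM))}

/-- The McKinsey axiom □◇p→◇□p. -/
def McKM : MForm := (MForm.box pM.dia).imp (MForm.box pM).dia

/-- The logic S4. -/
def S4L : Set MForm := {A | MProv S4Ax A}

/-- The logic S4.1 = S4 + McKinsey. -/
def S41L : Set MForm := {A | MProv (S4Ax ∪ {McKM}) A}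

/-- Axioms of the fusion S4.1 ∗ S4 : all theorems of S4.1 read with □₁ together
with all theorems of S4 read with □₂. -/
def FusionAx : Set BForm := (MForm.toB 0 '' S41L) ∪ (MForm.toB 1 '' S4L)

/-- The fusion S4.1 ∗ S4 (as a normal bimodal logic). -/
def FusionL : Set BForm := {A | BProv FusionAx A}

def pB : BForm := .var 0

/-- The formula ◇₁□₂(◇₁p → □₁p). -/
def MKB : BForm := BForm.dia 0 (BForm.box 1 ((BForm.dia 0 pB).imp (BForm.box 0 pB)))

/-- The logic L = S4.1 ∗ S4 + ◇₁□₂(◇₁p → □₁p). -/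
def LL : Set BForm := {A | BProv (FusionAx ∪ {MKB}) A}

/- ============== Kripke semantics ============== -/

/-- Truth of a bimodal formula at a point of a Kripke 2-frame `(W, R 0, R 1)`
under valuation `V`. -/
def BSat {W : Type} (R : Fin 2 → W → W → Prop) (V : ℕ → W → Prop) : W → BForm → Prop
  | x, .var n => V n x
  | _, .bot => False
  | x, .imp A B => BSat R V x A → BSat R V x B
  | x, .box i A => ∀ y, R i x y → BSat R V y A

/-- Frame validity for bimodal formulas. -/
def BValid {W : Type} (R : Fin 2 → W → W → Prop) (A : BForm) : Prop :=
  ∀ (V : ℕ → W → Prop) (x : W), BSat R V x A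

/-- Truth of a unimodal formula at a point of a Kripke frame. -/
def MKSat {W : Type} (R : W → W → Prop) (V : ℕ → W → Prop) : W → MForm → Prop
  | x, .var n => V n x
  | _, .bot => False
  | x, .imp A B => MKSat R V x A → MKSat R V x B
  | x, .box A => ∀ y, R x y → MKSat R V y A

/-- Frame validity for unimodal formulas. -/
def MKValid {W : Type} (R : W → W → Prop) (A : MForm) : Prop :=
  ∀ (V : ℕ → W → Prop) (x : W), MKSat R V x A

/- ============== Topological semantics ============== -/

/-- Topological truth of a unimodal formula: □A holds at `x` iff some open
neighbourhood of `x` satisfies `A` everywhere. -/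
def MTSat {X : Type} (t : TopologicalSpace X) (V : ℕ → X → Prop) : X → MForm → Prop
  | x, .var n => V n x
  | _, .bot => False
  | x, .imp A B => MTSat t V x A → MTSat t V x B
  | x, .box A => ∃ U : Set X, t.IsOpen U ∧ x ∈ U ∧ ∀ y ∈ U, MTSat t V y A

/-- Topological validity for unimodal formulas. -/
def MTValid {X : Type} (t : TopologicalSpace X) (A : MForm) : Prop :=
  ∀ (V : ℕ → X → Prop) (x : X), MTSat t V x A

/-- Bitopological truth of a bimodal formula: □ᵢ is interpreted via the
topology `t i`. -/
def BTSat {X : Type} (t : Fin 2 → TopologicalSpace X) (V : ℕ → X → Prop) : X → BForm → Prop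
  | x, .var n => V n x
  | _, .bot => False
  | x, .imp A B => BTSat t V x A → BTSat t V x B
  | x, .box i A => ∃ U : Set X, (t i).IsOpen U ∧ x ∈ U ∧ ∀ y ∈ U, BTSat t V y A

/-- Bitopological validity for bimodal formulas. -/
def BTValid {X : Type} (t : Fin 2 → TopologicalSpace X) (A : BForm) : Prop :=
  ∀ (V : ℕ → X → Prop) (x : X), BTSat t V x A

/-- The horizontal topology on `X × Y`: generated by the base
`{U × {y} : U open in X, y ∈ Y}`. -/
def horiz {X Y : Type} (t : TopologicalSpace X) : TopologicalSpace (X × Y) :=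
  TopologicalSpace.generateFrom
    {S | ∃ (U : Set X) (y : Y), t.IsOpen U ∧ S = U ×ˢ ({y} : Set Y)}

/-- The vertical topology on `X × Y`: generated by the base
`{{x} × U : x ∈ X, U open in Y}`. -/
def vert {X Y : Type} (t : TopologicalSpace Y) : TopologicalSpace (X × Y) :=
  TopologicalSpace.generateFrom
    {S | ∃ (x : X) (U : Set Y), t.IsOpen U ∧ S = ({x} : Set X) ×ˢ U}

/-- The topological product `L₁ ×ₜ L₂` of two unimodal logics: the set of all
bimodal formulas valid in every bitopological product `𝔛₁ × 𝔛₂` of (nonempty)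
topological spaces with `𝔛₁ ⊨ L₁` and `𝔛₂ ⊨ L₂`. -/
def TopProdLogic (L1 L2 : Set MForm) : Set BForm :=
  {A | ∀ (X Y : Type) (t1 : TopologicalSpace X) (t2 : TopologicalSpace Y),
      Nonempty X → Nonempty Y →
      (∀ B ∈ L1, MTValid t1 B) → (∀ B ∈ L2, MTValid t2 B) →
      BTValid ![horiz t1, vert t2] A}

/-- The Alexandrov topology of a (reflexive transitive) relation `R`:
the topology with base `{R(x) : x ∈ W}`. -/
def alexandrov {W : Type} (R : W → W → Prop) : TopologicalSpace W :=
  TopologicalSpace.generateFrom {S | ∃ x, S = {t | R x t}}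

/-- A space is weakly scattered if every nonempty open set contains an
isolated point. -/
def WeaklyScattered {X : Type} (t : TopologicalSpace X) : Prop :=
  ∀ U : Set X, t.IsOpen U → U.Nonempty → ∃ x ∈ U, t.IsOpen ({x} : Set X)

/-- p-morphism between Kripke 1-frames. -/
def IsPMorphism {W U : Type} (R : W → W → Prop) (S : U → U → Prop) (f : W → U) : Prop :=
  Function.Surjective f ∧ (∀ x y, R x y → S (f x) (f y)) ∧
    (∀ x u, S (f x) u → ∃ y, R x y ∧ f y = u)

/-- p-morphism between Kripke 2-frames. -/
def IsPMorphism2 {W U : Type} (R1 R2 : W → W → Prop) (S1 S2 : U → U → Prop)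
    (f : W → U) : Prop :=
  Function.Surjective f ∧
    (∀ x y, R1 x y → S1 (f x) (f y)) ∧ (∀ x u, S1 (f x) u → ∃ y, R1 x y ∧ f y = u) ∧
    (∀ x y, R2 x y → S2 (f x) (f y)) ∧ (∀ x u, S2 (f x) u → ∃ y, R2 x y ∧ f y = u)

/- ============== The frames 𝕋₂,₂ and 𝕋₂,₂₊₂ ============== -/

/-- The four-letter alphabet {a₁,a₂,b₁,b₂}: `(false, i)` is the a-letter `aᵢ₊₁`
and `(true, i)` is the b-letter `bᵢ₊₁`. -/
abbrev Letter : Type := Bool × Fin 2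

/-- `T₂,₂ = {a₁,a₂,b₁,b₂}*`. -/
abbrev T22 : Type := List Letter

/-- `T₂ = {1,2}*`. -/
abbrev T2W : Type := List (Fin 2)

/-- First relation of `𝕋₂,₂`: append a word over the a-letters. -/
def R1T (w w' : T22) : Prop := ∃ c : T22, (∀ l ∈ c, l.1 = false) ∧ w' = w ++ c

/-- Second relation of `𝕋₂,₂`: append a word over the b-letters. -/
def R2T (w w' : T22) : Prop := ∃ d : T22, (∀ l ∈ d, l.1 = true) ∧ w' = w ++ d

/-- The carrier of `𝕋₂,₂₊₂` : `⟨a, root⟩` is encoded as `(a, none)` and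
`⟨a, b⟩` with `b ∈ T₂` as `(a, some b)`. -/
abbrev W222 : Type := T22 × Option T2W

/-- Generators of `R₁′`. -/
def R1'gen : W222 → W222 → Prop := fun x y =>
  (∃ a a', R1T a a' ∧ x = (a, none) ∧ y = (a', none)) ∨
  (∃ a, x = (a, none) ∧ y = (a, some ([] : T2W)))

/-- `R₁′`: smallest reflexive transitive relation containing the generators. -/
def R1' : W222 → W222 → Prop := Relation.ReflTransGen R1'gen

/-- Generators of `R₂′`. -/
def R2'gen : W222 → W222 → Prop := fun x y =>
  (∃ a a', R2T a a' ∧ x = (a, none) ∧ y = (a', none)) ∨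
  (∃ a b b', b <+: b' ∧ x = (a, some b) ∧ y = (a, some b'))

/-- `R₂′`: smallest reflexive transitive relation containing the generators. -/
def R2' : W222 → W222 → Prop := Relation.ReflTransGen R2'gen

/- ============== Pseudo-infinite paths and the spaces 𝒴 and 𝔛 ============== -/

/-- Infinite sequences over {0,1,2}: `none` encodes 0 and `some i` encodes
`i+1 ∈ {1,2}`. -/
abbrev Seq3 : Type := ℕ → Option (Fin 2)

/-- `W_ω`: pseudo-infinite paths, i.e. sequences with finitely many nonzero
entries. -/
def Wom : Type := {s : Seq3 // {k | s k ≠ none}.Finite}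

/-- `st(s)`: the least `N` such that all entries from `N` on are zero. -/
noncomputable def stN {γ : Type} (s : ℕ → Option γ) : ℕ :=
  sInf {N | ∀ k, N ≤ k → s k = none}

/-- The first `k` entries of a sequence, as a finite word. -/
def takeSeq {γ : Type} (s : ℕ → Option γ) (k : ℕ) : List (Option γ) :=
  List.ofFn (fun i : Fin k => s i.1)

/-- `f_F`: delete all zeros from a finite word. -/
def fF {γ : Type} (l : List (Option γ)) : List γ := l.filterMap id

/-- `f_ω`: delete the zeros from a pseudo-infinite path, producing a finite word. -/
noncomputable def squash {γ : Type} (s : ℕ → Option γ) : List γ := fF (takeSeq s (stN s))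

/-- The basic set `U_k(α) = {β ∈ W_ω : α↾k = β↾k and f_F(α↾k) ⊑ f_ω(β)}`. -/
def Uset (α : Wom) (k : ℕ) : Set Wom :=
  {β | takeSeq β.1 k = takeSeq α.1 k ∧ fF (takeSeq α.1 k) <+: squash β.1}

/-- The topology `T_ω` on `W_ω` generated by the base `{U_k(α) : k > 0}`;
`𝒴 = (W_ω, T_ω)`. -/
def Tom : TopologicalSpace Wom :=
  TopologicalSpace.generateFrom {S | ∃ α k, 0 < k ∧ S = Uset α k}

/-- The basic sets of the space `𝔛`:
`U′_k(α,0) = (U_k(α) × {0}) ∪ (U_k(α) × {n ≥ k})` and `U′_k(α,n) = {⟨α,n⟩}`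
for `n ≥ 1`. -/
def U'set (α : Wom) (k n : ℕ) : Set (Wom × ℕ) :=
  if n = 0 then (Uset α k ×ˢ ({0} : Set ℕ)) ∪ (Uset α k ×ˢ {m : ℕ | k ≤ m})
  else {(α, n)}

/-- The topology of the space `𝔛 = (W_ω × ℕ, T)`. -/
def TX : TopologicalSpace (Wom × ℕ) :=
  TopologicalSpace.generateFrom {S | ∃ α k n, S = U'set α k n}

/-- Interleaving of two paths: the sequence `a_{x₁} b_{y₁} a_{x₂} b_{y₂} …`
(with `a₀ = b₀ = 0`). -/
def interleave (α β : Seq3) : ℕ → Option Letter := fun n =>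
  if n % 2 = 0 then (α (n / 2)).map (fun v => ((false, v) : Letter))
  else (β (n / 2)).map (fun v => ((true, v) : Letter))

/-- The map `g : W_ω × W_ω → T₂,₂` obtained by interleaving and deleting zeros. -/
noncomputable def gmap (α β : Seq3) : T22 := squash (interleave α β)

/-- `g` as a map on pairs. -/
noncomputable def gPair : Wom × Wom → T22 := fun q => gmap q.1.1 q.2.1

/-- `s↾n · 0^ω`. -/
def truncSeq (s : Seq3) (n : ℕ) : Seq3 := fun k => if k < n then s k else none

/-- The tail `γ` of `s = s↾n · γ`. -/
def shiftSeq (s : Seq3) (n : ℕ) : Seq3 := fun k => s (n + k)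

/-- The map `f : 𝔛 × 𝒴 → 𝕋₂,₂₊₂` :
`f(⟨α,0⟩,β) = ⟨g(α,β), root⟩` and for `n ≥ 1`,
`f(⟨α,n⟩,β) = ⟨g(α↾n·0^ω, β↾n·0^ω), f_ω(γ)⟩` where `β = β↾n·γ`. -/
noncomputable def fXY : (Wom × ℕ) × Wom → W222 := fun q =>
  if q.1.2 = 0 then (gmap q.1.1.1 q.2.1, none)
  else (gmap (truncSeq q.1.1.1 q.1.2) (truncSeq q.2.1 q.1.2),
        some (squash (shiftSeq q.2.1 q.1.2)))

/-- An effective encoding of bimodal formulas by natural numbers. -/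
def encodeB : BForm → ℕ
  | .var n => Nat.pair 0 n
  | .bot => Nat.pair 1 0
  | .imp A B => Nat.pair 2 (Nat.pair (encodeB A) (encodeB B))
  | .box i A => Nat.pair 3 (Nat.pair i.1 (encodeB A))

/-!
Canonical model and filtration. Call a maximal `L`-consistent set *good* if it contains every
instance of `θ(C) = □₂(◇₁C → □₁C)`. A good set is its own only canonical `R₁`-successor, goodness
is inherited along `R₂` (axiom `4` for `□₂`), and every maximal consistent set `x` has a good
`R₁`-successor: otherwise `□₁¬(θ(C₁) ∧ … ∧ θ(Cₙ)) ∈ x` for some `C₁, …, Cₙ`, whereas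
`◇₁(θ(C₁) ∧ … ∧ θ(Cₙ))` is a theorem: McKinsey's `□₁◇₁ → ◇₁□₁` turns each axiom `◇₁θ(Cₖ)`
into a theorem `◇₁□₁θ(Cₖ)`, and in `S4` theorems of the form `◇□X` are closed under conjunction.

Filtering the canonical model through the subformulas of a non-theorem `A`, while remembering
whether a point is good, gives a finite reflexive transitive 2-frame in which every point sees,
by `R₁`, a point all of whose `R₂`-successors are `R₁`-endpoints. Such frames validate `L`, and
`A` fails in this one.
-/

open BForm

inductive BProvFrom (Ax Γ : Set BForm) : BForm → Prop
  | hyp {A : BForm} : A ∈ Γ → BProvFrom Ax Γ A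
  | thm {A : BForm} : BProv Ax A → BProvFrom Ax Γ A
  | mp {A B : BForm} : BProvFrom Ax Γ (A.imp B) → BProvFrom Ax Γ A → BProvFrom Ax Γ B

section Hilbert

variable {Ax Γ Δ : Set BForm} {A B C : BForm}

theorem BProv.imp_self (A : BForm) : BProv Ax (A.imp A) :=
  .mp (.mp (.pl2 (B := A.imp A)) .pl1) .pl1

namespace BProvFrom

theorem trans (h : BProvFrom Ax Γ A) (hΓ : ∀ B ∈ Γ, BProvFrom Ax Δ B) : BProvFrom Ax Δ A := by
  induction h with
  | hyp h => exact hΓ _ h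
  | thm h => exact thm h
  | mp _ _ ih1 ih2 => exact mp ih1 ih2

theorem mono (h : BProvFrom Ax Γ A) (hs : Γ ⊆ Δ) : BProvFrom Ax Δ A :=
  h.trans fun _ hB => hyp (hs hB)

theorem toBProv (h : BProvFrom Ax ∅ A) : BProv Ax A := by
  induction h with
  | hyp h => exact absurd h (Set.notMem_empty _)
  | thm h => exact h
  | mp _ _ ih1 ih2 => exact .mp ih1 ih2

theorem deduction (h : BProvFrom Ax (insert B Γ) A) : BProvFrom Ax Γ (B.imp A) := by
  induction h with
  | hyp h =>
    rcases h with rfl | h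
    · exact thm (BProv.imp_self _)
    · exact mp (thm .pl1) (hyp h)
  | thm h => exact mp (thm .pl1) (thm h)
  | mp _ _ ih1 ih2 => exact mp (mp (thm .pl2) ih1) ih2

theorem exists_mem_of_isChain {c : Set (Set BForm)} (hc : IsChain (· ⊆ ·) c) (hne : c.Nonempty)
    (h : BProvFrom Ax (⋃₀ c) A) : ∃ S ∈ c, BProvFrom Ax S A := by
  induction h with
  | hyp h =>
    obtain ⟨S, hS, hAS⟩ := h
    exact ⟨S, hS, hyp hAS⟩
  | thm h => exact ⟨hne.some, hne.some_mem, thm h⟩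
  | mp _ _ ih1 ih2 =>
    obtain ⟨S1, hS1, h1⟩ := ih1
    obtain ⟨S2, hS2, h2⟩ := ih2
    rcases hc.total hS1 hS2 with hsub | hsub
    · exact ⟨S2, hS2, mp (h1.mono hsub) h2⟩
    · exact ⟨S1, hS1, mp h1 (h2.mono hsub)⟩

theorem exists_list_of_union (h : BProvFrom Ax (Γ ∪ Δ) A) :
    ∃ l : List BForm, (∀ B ∈ l, B ∈ Δ) ∧ BProvFrom Ax (Γ ∪ {B | B ∈ l}) A := by
  induction h with
  | hyp h =>
    rcases h with h | h
    · exact ⟨[], by simp, hyp (.inl h)⟩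
    · exact ⟨[_], by simpa using h, hyp (.inr (by simp))⟩
  | thm h => exact ⟨[], by simp, thm h⟩
  | mp _ _ ih1 ih2 =>
    obtain ⟨l1, hl1, h1⟩ := ih1
    obtain ⟨l2, hl2, h2⟩ := ih2
    refine ⟨l1 ++ l2, fun B hB => (List.mem_append.1 hB).elim (hl1 B) (hl2 B), ?_⟩
    exact mp (h1.mono (Set.union_subset_union_right _ fun B hB => List.mem_append_left _ hB))
      (h2.mono (Set.union_subset_union_right _ fun B hB => List.mem_append_right _ hB))

end BProvFrom

def BForm.and (X Y : BForm) : BForm := (X.imp Y.neg).neg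

def BForm.top : BForm := bot.neg

def BForm.conj (l : List BForm) : BForm := l.foldr BForm.and top

namespace BProv

theorem imp_trans (h1 : BProv Ax (A.imp B)) (h2 : BProv Ax (B.imp C)) : BProv Ax (A.imp C) :=
  .mp (.mp .pl2 (.mp .pl1 h2)) h1

theorem bot_imp (A : BForm) : BProv Ax (bot.imp A) :=
  imp_trans (.pl1 (B := A.neg)) .pl3

theorem imp_neg_neg (A : BForm) : BProv Ax (A.imp A.neg.neg) := by
  refine BProvFrom.toBProv (.deduction (.deduction ?_))
  exact .mp (.hyp (A := A.neg) (by simp)) (.hyp (by simp))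

theorem imp_imp_neg_imp_neg (A B : BForm) : BProv Ax ((A.imp B).imp (B.neg.imp A.neg)) := by
  refine BProvFrom.toBProv (.deduction (.deduction (.deduction ?_)))
  exact .mp (.hyp (A := B.neg) (by simp)) (.mp (.hyp (A := A.imp B) (by simp)) (.hyp (by simp)))

theorem neg_imp_neg (h : BProv Ax (A.imp B)) : BProv Ax (B.neg.imp A.neg) :=
  .mp (imp_imp_neg_imp_neg A B) h

theorem imp_imp_and (X Y : BForm) : BProv Ax (X.imp (Y.imp (X.and Y))) := by
  refine BProvFrom.toBProv (.deduction (.deduction (.deduction ?_)))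
  exact .mp (.mp (.hyp (A := X.imp Y.neg) (by simp)) (.hyp (A := X) (by simp))) (.hyp (by simp))

theorem and_imp_left (X Y : BForm) : BProv Ax ((X.and Y).imp X) := by
  refine BProvFrom.toBProv (.deduction (.mp (.thm .pl3) (.deduction ?_)))
  refine .mp (.hyp (A := (X.imp Y.neg).neg) (by simp [BForm.and])) (.deduction ?_)
  exact .mp (.thm (bot_imp Y.neg)) (.mp (.hyp (A := X.neg) (by simp)) (.hyp (by simp)))

theorem and_imp_right (X Y : BForm) : BProv Ax ((X.and Y).imp Y) := by
  refine BProvFrom.toBProv (.deduction (.mp (.thm .pl3) (.deduction ?_)))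
  exact .mp (.hyp (A := (X.imp Y.neg).neg) (by simp [BForm.and]))
    (.mp (.thm .pl1) (.hyp (A := Y.neg) (by simp)))

theorem conj_imp_of_mem {l : List BForm} {X : BForm} (hX : X ∈ l) :
    BProv Ax ((conj l).imp X) := by
  induction l with
  | nil => simp at hX
  | cons Y l ih =>
    rcases List.mem_cons.1 hX with rfl | hX
    · exact and_imp_left _ _
    · exact imp_trans (and_imp_right _ _) (ih hX)

variable (i : Fin 2)

theorem box_mono (h : BProv Ax (A.imp B)) : BProv Ax ((box i A).imp (box i B)) :=
  .mp (.kax i) (.nec i h)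

theorem box_imp_dia_imp_dia (A B : BForm) :
    BProv Ax ((box i (A.imp B)).imp ((dia i A).imp (dia i B))) := by
  refine BProvFrom.toBProv (.deduction (.deduction (.deduction ?_)))
  refine .mp (.hyp (A := (box i A.neg).neg) (by simp [dia])) ?_
  refine .mp (.mp (.thm (.kax i)) ?_) (.hyp (A := box i B.neg) (by simp [dia]))
  exact .mp (.thm (box_mono i (imp_imp_neg_imp_neg A B))) (.hyp (A := box i (A.imp B)) (by simp))

theorem dia_mono (h : BProv Ax (A.imp B)) : BProv Ax ((dia i A).imp (dia i B)) :=
  .mp (box_imp_dia_imp_dia i A B) (.nec i h)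

theorem box_imp_box_imp_box_and (X Y : BForm) :
    BProv Ax ((box i X).imp ((box i Y).imp (box i (X.and Y)))) :=
  imp_trans (box_mono i (imp_imp_and X Y)) (.kax i)

theorem box_imp_dia_imp_dia_and (X Y : BForm) :
    BProv Ax ((box i X).imp ((dia i Y).imp (dia i (X.and Y)))) :=
  imp_trans (box_mono i (imp_imp_and X Y)) (box_imp_dia_imp_dia i Y (X.and Y))

end BProv

end Hilbert

section LAxioms

def LAx : Set BForm := FusionAx ∪ {MKB}

def BForm.theta (C : BForm) : BForm := box 1 ((dia 0 C).imp (box 0 C))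

theorem LAx_of_S4Ax {m : MForm} (hm : m ∈ S4Ax) (i : Fin 2) : BProv LAx (m.toB i) := by
  fin_cases i
  · exact .axm (.inl (.inl ⟨m, MProv.axm (.inl hm), rfl⟩))
  · exact .axm (.inl (.inr ⟨m, MProv.axm hm, rfl⟩))

theorem LAx_T (i : Fin 2) (A : BForm) : BProv LAx ((box i A).imp A) :=
  .subst (fun _ => A) (LAx_of_S4Ax (.inl rfl) i)

theorem LAx_four (i : Fin 2) (A : BForm) : BProv LAx ((box i A).imp (box i (box i A))) :=
  .subst (fun _ => A) (LAx_of_S4Ax (.inr rfl) i)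

theorem LAx_mckinsey (A : BForm) : BProv LAx ((box 0 (dia 0 A)).imp (dia 0 (box 0 A))) :=
  .subst (fun _ => A) (.axm (.inl (.inl ⟨McKM, MProv.axm (.inr rfl), rfl⟩)) :
    BProv LAx (McKM.toB 0))

theorem LAx_dia_theta (C : BForm) : BProv LAx (dia 0 C.theta) :=
  .subst (fun _ => C) (.axm (.inr rfl) : BProv LAx MKB)

theorem LAx_imp_dia (i : Fin 2) (A : BForm) : BProv LAx (A.imp (dia i A)) := by
  refine BProvFrom.toBProv (.deduction (.deduction ?_))
  exact .mp (.mp (.thm (LAx_T i A.neg)) (.hyp (by simp))) (.hyp (by simp))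

theorem LAx_dia_dia (i : Fin 2) (A : BForm) : BProv LAx ((dia i (dia i A)).imp (dia i A)) :=
  .neg_imp_neg (.imp_trans (LAx_four i A.neg) (.box_mono i (.imp_neg_neg _)))

theorem LAx_dia_box_of_dia {X : BForm} (h : BProv LAx (dia 0 X)) :
    BProv LAx (dia 0 (box 0 X)) :=
  .mp (LAx_mckinsey X) (.nec 0 h)

theorem LAx_dia_box_and {X Y : BForm} (hX : BProv LAx (dia 0 (box 0 X)))
    (hY : BProv LAx (dia 0 (box 0 Y))) : BProv LAx (dia 0 (box 0 (X.and Y))) := by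
  have hboxes : BProv LAx (((box 0 X).and (box 0 Y)).imp (box 0 (X.and Y))) := by
    refine BProvFrom.toBProv (.deduction (.mp (.mp (.thm (.box_imp_box_imp_box_and 0 X Y)) ?_) ?_))
    · exact .mp (.thm (.and_imp_left _ (box 0 Y))) (.hyp (by simp))
    · exact .mp (.thm (.and_imp_right (box 0 X) _)) (.hyp (by simp))
  have hpair : BProv LAx ((box 0 X).imp (dia 0 ((box 0 X).and (box 0 Y)))) := by
    refine BProvFrom.toBProv (.deduction ?_)
    refine .mp (.mp (.thm (.box_imp_dia_imp_dia_and 0 (box 0 X) (box 0 Y))) ?_) (.thm hY)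
    exact .mp (.thm (LAx_four 0 X)) (.hyp (by simp))
  have hstep : BProv LAx ((box 0 X).imp (dia 0 (box 0 (X.and Y)))) :=
    .imp_trans hpair (.dia_mono 0 hboxes)
  exact .mp (.imp_trans (.dia_mono 0 hstep) (LAx_dia_dia 0 _)) hX

theorem LAx_dia_box_conj {l : List BForm} (h : ∀ X ∈ l, BProv LAx (dia 0 X)) :
    BProv LAx (dia 0 (box 0 (conj l))) := by
  induction l with
  | nil => exact .mp (LAx_imp_dia 0 _) (.nec 0 (.imp_self bot))
  | cons X l ih =>
    exact LAx_dia_box_and (LAx_dia_box_of_dia (h X (by simp)))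
      (ih fun Y hY => h Y (by simp [hY]))

theorem LAx_dia_conj {l : List BForm} (h : ∀ X ∈ l, BProv LAx (dia 0 X)) :
    BProv LAx (dia 0 (conj l)) :=
  .mp (.dia_mono 0 (LAx_T 0 (conj l))) (LAx_dia_box_conj h)

end LAxioms

section Canonical

def Consistent (Ax S : Set BForm) : Prop := ¬ BProvFrom Ax S bot

def MaxConsistent (Ax S : Set BForm) : Prop :=
  Consistent Ax S ∧ ∀ A : BForm, A ∈ S ∨ A.neg ∈ S

variable {Ax : Set BForm} {x y : Set BForm} {A B : BForm}

namespace MaxConsistent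

theorem mem_of_provFrom (hx : MaxConsistent Ax x) (h : BProvFrom Ax x A) : A ∈ x :=
  (hx.2 A).resolve_right fun hA => hx.1 (.mp (.hyp hA) h)

theorem mem_of_prov (hx : MaxConsistent Ax x) (h : BProv Ax A) : A ∈ x :=
  hx.mem_of_provFrom (.thm h)

theorem false_of_mem_neg (hx : MaxConsistent Ax x) (h : A ∈ x) (hneg : A.neg ∈ x) : False :=
  hx.1 (.mp (.hyp hneg) (.hyp h))

theorem mem_of_imp_mem (hx : MaxConsistent Ax x) (himp : A.imp B ∈ x) (h : A ∈ x) : B ∈ x :=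
  hx.mem_of_provFrom (.mp (.hyp himp) (.hyp h))

theorem imp_mem_iff (hx : MaxConsistent Ax x) : A.imp B ∈ x ↔ (A ∈ x → B ∈ x) := by
  refine ⟨hx.mem_of_imp_mem, fun h => hx.mem_of_provFrom ?_⟩
  rcases hx.2 A with hA | hA
  · exact .mp (.thm .pl1) (.hyp (h hA))
  · refine .deduction (.mp (.thm (.bot_imp B)) ?_)
    exact .mp (.hyp (A := A.neg) (Set.mem_insert_of_mem _ hA)) (.hyp (Set.mem_insert _ _))

theorem eq_of_subset (hx : MaxConsistent Ax x) (hy : MaxConsistent Ax y) (h : x ⊆ y) : x = y :=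
  h.antisymm fun A hA => (hx.2 A).resolve_right fun hneg => hy.false_of_mem_neg hA (h hneg)

end MaxConsistent

theorem Consistent.exists_maxConsistent_superset {S : Set BForm} (h : Consistent Ax S) :
    ∃ M, MaxConsistent Ax M ∧ S ⊆ M := by
  obtain ⟨M, hSM, hM⟩ := zorn_subset_nonempty {T | Consistent Ax T ∧ S ⊆ T}
    (fun c hc hchain hne => by
      refine ⟨⋃₀ c, ⟨fun hbot => ?_, ?_⟩, fun _ => Set.subset_sUnion_of_mem⟩
      · obtain ⟨T, hT, hTbot⟩ := BProvFrom.exists_mem_of_isChain hchain hne hbot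
        exact (hc hT).1 hTbot
      · exact (hc hne.some_mem).2.trans (Set.subset_sUnion_of_mem hne.some_mem))
    S ⟨h, le_rfl⟩
  have neg_provFrom : ∀ B ∉ M, BProvFrom Ax M B.neg := fun B hB => .deduction <| by
    by_contra hcon
    exact hB (hM.2 ⟨hcon, hM.1.2.trans (Set.subset_insert _ _)⟩ (Set.subset_insert _ _)
      (Set.mem_insert _ _))
  refine ⟨M, ⟨hM.1.1, fun A => ?_⟩, hM.1.2⟩
  by_contra! hA
  exact hM.1.1 (.mp (neg_provFrom _ hA.2) (neg_provFrom _ hA.1))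

theorem exists_maxConsistent_not_mem (h : ¬ BProv Ax A) : ∃ x, MaxConsistent Ax x ∧ A ∉ x := by
  have hcon : Consistent Ax {A.neg} := fun hbot =>
    h (.mp .pl3 (BProvFrom.toBProv (.deduction (hbot.mono (by simp)))))
  obtain ⟨x, hx, hAx⟩ := hcon.exists_maxConsistent_superset
  exact ⟨x, hx, fun hA => hx.false_of_mem_neg hA (hAx rfl)⟩

def canonicalRel (i : Fin 2) (x y : Set BForm) : Prop := ∀ B : BForm, box i B ∈ x → B ∈ y

theorem BProvFrom.box_of_unboxed (i : Fin 2) {C : BForm}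
    (h : BProvFrom Ax {D | box i D ∈ x} C) : BProvFrom Ax x (box i C) := by
  induction h with
  | hyp h => exact .hyp h
  | thm h => exact .thm (.nec i h)
  | mp _ _ ih1 ih2 => exact .mp (.mp (.thm (.kax i)) ih1) ih2

theorem MaxConsistent.exists_canonicalRel_not_mem (i : Fin 2) (hx : MaxConsistent Ax x)
    {C : BForm} (hC : box i C ∉ x) : ∃ y, MaxConsistent Ax y ∧ canonicalRel i x y ∧ C ∉ y := by
  have hcon : Consistent Ax (insert C.neg {D | box i D ∈ x}) := fun hbot =>
    hC (hx.mem_of_provFrom (.box_of_unboxed i (.mp (.thm .pl3) (.deduction hbot))))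
  obtain ⟨y, hy, hsub⟩ := hcon.exists_maxConsistent_superset
  exact ⟨y, hy, fun B hB => hsub (Set.mem_insert_of_mem _ hB),
    fun hCy => hy.false_of_mem_neg hCy (hsub (Set.mem_insert _ _))⟩

theorem canonicalRel_refl (i : Fin 2) (hx : MaxConsistent LAx x) : canonicalRel i x x :=
  fun B hB => hx.mem_of_imp_mem (hx.mem_of_prov (LAx_T i B)) hB

theorem canonicalRel_box (i : Fin 2) (hx : MaxConsistent LAx x) (h : canonicalRel i x y)
    (hB : box i B ∈ x) : box i B ∈ y :=
  h _ (hx.mem_of_imp_mem (hx.mem_of_prov (LAx_four i B)) hB)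

def IsGood (x : Set BForm) : Prop := ∀ C : BForm, C.theta ∈ x

theorem MaxConsistent.exists_canonicalRel_isGood (hx : MaxConsistent LAx x) :
    ∃ y, MaxConsistent LAx y ∧ canonicalRel 0 x y ∧ IsGood y := by
  have hcon : Consistent LAx ({D | box 0 D ∈ x} ∪ Set.range theta) := by
    intro hbot
    obtain ⟨l, hl, hlbot⟩ := BProvFrom.exists_list_of_union hbot
    have hconj : BProvFrom LAx (insert (conj l) {D | box 0 D ∈ x}) bot :=
      hlbot.trans fun B hB => hB.elim (fun h => .hyp (Set.mem_insert_of_mem _ h))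
        fun h => .mp (.thm (.conj_imp_of_mem h)) (.hyp (Set.mem_insert _ _))
    have hbox : box 0 (conj l).neg ∈ x := hx.mem_of_provFrom (.box_of_unboxed 0 (.deduction hconj))
    refine hx.false_of_mem_neg hbox (hx.mem_of_prov (LAx_dia_conj fun X hX => ?_))
    obtain ⟨C, rfl⟩ := hl X hX
    exact LAx_dia_theta C
  obtain ⟨y, hy, hsub⟩ := hcon.exists_maxConsistent_superset
  exact ⟨y, hy, fun B hB => hsub (.inl hB), fun C => hsub (.inr ⟨C, rfl⟩)⟩

theorem IsGood.eq_of_canonicalRel_zero (hx : MaxConsistent LAx x) (hg : IsGood x)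
    (hy : MaxConsistent LAx y) (h : canonicalRel 0 x y) : y = x := by
  refine (hx.eq_of_subset hy fun C hC => h _ ?_).symm
  have hcl : (dia 0 C).imp (box 0 C) ∈ x := hx.mem_of_imp_mem (hx.mem_of_prov (LAx_T 1 _)) (hg C)
  exact hx.mem_of_imp_mem hcl (hx.mem_of_imp_mem (hx.mem_of_prov (LAx_imp_dia 0 C)) hC)

theorem IsGood.of_canonicalRel_one (hx : MaxConsistent LAx x) (hg : IsGood x)
    (h : canonicalRel 1 x y) : IsGood y :=
  fun C => h _ (hx.mem_of_imp_mem (hx.mem_of_prov (LAx_four 1 _)) (hg C))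

end Canonical

section Soundness

variable {W : Type}

theorem BSat_subst (R : Fin 2 → W → W → Prop) (V : ℕ → W → Prop) (σ : ℕ → BForm) (A : BForm)
    (x : W) : BSat R V x (A.subst σ) ↔ BSat R (fun n y => BSat R V y (σ n)) x A := by
  induction A generalizing x with
  | var n => rfl
  | bot => rfl
  | imp A B ihA ihB => exact imp_congr (ihA x) (ihB x)
  | box i A ih => exact forall_congr' fun y => imp_congr_right fun _ => ih y

theorem MKSat_subst (R : W → W → Prop) (V : ℕ → W → Prop) (σ : ℕ → MForm) (A : MForm)
    (x : W) : MKSat R V x (A.subst σ) ↔ MKSat R (fun n y => MKSat R V y (σ n)) x A := by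
  induction A generalizing x with
  | var n => rfl
  | bot => rfl
  | imp A B ihA ihB => exact imp_congr (ihA x) (ihB x)
  | box A ih => exact forall_congr' fun y => imp_congr_right fun _ => ih y

theorem BSat_toB (R : Fin 2 → W → W → Prop) (i : Fin 2) (V : ℕ → W → Prop) (A : MForm)
    (x : W) : BSat R V x (A.toB i) ↔ MKSat (R i) V x A := by
  induction A generalizing x with
  | var n => rfl
  | bot => rfl
  | imp A B ihA ihB => exact imp_congr (ihA x) (ihB x)
  | box A ih => exact forall_congr' fun y => imp_congr_right fun _ => ih y

theorem MProv.valid {R : W → W → Prop} {Ax : Set MForm} (hAx : ∀ m ∈ Ax, MKValid R m)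
    {m : MForm} (h : MProv Ax m) : MKValid R m := by
  induction h with
  | axm h => exact hAx _ h
  | pl1 => exact fun _ _ ha _ => ha
  | pl2 => exact fun _ _ h1 h2 ha => h1 ha (h2 ha)
  | pl3 => exact fun _ _ h => Classical.byContradiction h
  | kax => exact fun _ _ h1 h2 y hy => h1 y hy (h2 y hy)
  | mp _ _ ih1 ih2 => exact fun V x => ih1 V x (ih2 V x)
  | nec _ ih => exact fun V _ y _ => ih V y
  | subst σ _ ih => exact fun V x => (MKSat_subst R V σ _ x).2 (ih _ x)

theorem BProv.valid {R : Fin 2 → W → W → Prop} {Ax : Set BForm} (hAx : ∀ B ∈ Ax, BValid R B)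
    {A : BForm} (h : BProv Ax A) : BValid R A := by
  induction h with
  | axm h => exact hAx _ h
  | pl1 => exact fun _ _ ha _ => ha
  | pl2 => exact fun _ _ h1 h2 ha => h1 ha (h2 ha)
  | pl3 => exact fun _ _ h => Classical.byContradiction h
  | kax => exact fun _ _ h1 h2 y hy => h1 y hy (h2 y hy)
  | mp _ _ ih1 ih2 => exact fun V x => ih1 V x (ih2 V x)
  | nec _ _ ih => exact fun V _ y _ => ih V y
  | subst σ _ ih => exact fun V x => (BSat_subst R V σ _ x).2 (ih _ x)

theorem S4Ax_valid {R : W → W → Prop} (hrefl : ∀ x, R x x)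
    (htrans : ∀ x y z, R x y → R y z → R x z) : ∀ m ∈ S4Ax, MKValid R m := by
  rintro m (rfl | rfl) V x
  · exact fun h => h x (hrefl x)
  · exact fun h y hxy z hyz => h z (htrans _ _ _ hxy hyz)

theorem BSat_dia_imp_box_of_endpoint {R : Fin 2 → W → W → Prop} (V : ℕ → W → Prop) {i : Fin 2}
    {z : W} (hz : ∀ v, R i z v → v = z) (A : BForm) : BSat R V z ((dia i A).imp (box i A)) := by
  intro hdia v hv
  rw [hz v hv]
  by_contra hA
  exact hdia fun u hu => by rw [hz u hu]; exact hA

def SeesEndpointCone (R : Fin 2 → W → W → Prop) : Prop :=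
  ∀ x, ∃ y, R 0 x y ∧ ∀ z, R 1 y z → ∀ v, R 0 z v → v = z

theorem LAx_valid {R : Fin 2 → W → W → Prop} (hrefl : ∀ i x, R i x x)
    (htrans : ∀ i x y z, R i x y → R i y z → R i x z) (hcone : SeesEndpointCone R) :
    ∀ B ∈ LAx, BValid R B := by
  have mckinsey : MKValid (R 0) McKM := fun V x => by
    rw [← BSat_toB]
    intro hboxdia hnot
    obtain ⟨y, hxy, hy⟩ := hcone x
    exact hnot y hxy (BSat_dia_imp_box_of_endpoint V (hy y (hrefl 1 y)) pB (hboxdia y hxy))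
  rintro B ((⟨m, hm, rfl⟩ | ⟨m, hm, rfl⟩) | rfl) V x
  · refine (BSat_toB R 0 V m x).2 (MProv.valid (fun m' hm' => ?_) hm V x)
    rcases hm' with hm' | rfl
    exacts [S4Ax_valid (hrefl 0) (htrans 0) m' hm', mckinsey]
  · exact (BSat_toB R 1 V m x).2 (MProv.valid (S4Ax_valid (hrefl 1) (htrans 1)) hm V x)
  · intro hnot
    obtain ⟨y, hxy, hy⟩ := hcone x
    exact hnot y hxy fun z hz => BSat_dia_imp_box_of_endpoint V (hy z hz) pB

end Soundness

section FiniteModel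

def subformulas : BForm → List BForm
  | .var n => [.var n]
  | .bot => [.bot]
  | .imp A B => .imp A B :: (subformulas A ++ subformulas B)
  | .box i A => .box i A :: subformulas A

variable {A B C : BForm} {i : Fin 2}

theorem mem_subformulas_self (A : BForm) : A ∈ subformulas A := by
  cases A <;> simp [subformulas]

theorem subformulas_subset_of_mem (h : B ∈ subformulas C) : subformulas B ⊆ subformulas C := by
  induction C with
  | var n | bot =>
    simp only [subformulas, List.mem_singleton] at h
    exact h ▸ List.Subset.refl _
  | imp C₁ C₂ ih₁ ih₂ =>
    rcases List.mem_cons.1 h with rfl | h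
    · exact List.Subset.refl _
    · rcases List.mem_append.1 h with h | h
      · exact List.Subset.trans (ih₁ h) fun D hD => by simp [subformulas, hD]
      · exact List.Subset.trans (ih₂ h) fun D hD => by simp [subformulas, hD]
  | box i C ih =>
    rcases List.mem_cons.1 h with rfl | h
    · exact List.Subset.refl _
    · exact List.Subset.trans (ih h) fun D hD => by simp [subformulas, hD]

theorem mem_subformulas_of_imp_left (h : A.imp B ∈ subformulas C) : A ∈ subformulas C :=
  subformulas_subset_of_mem h (by simp [subformulas, mem_subformulas_self])

theorem mem_subformulas_of_imp_right (h : A.imp B ∈ subformulas C) : B ∈ subformulas C :=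
  subformulas_subset_of_mem h (by simp [subformulas, mem_subformulas_self])

theorem mem_subformulas_of_box (h : box i A ∈ subformulas C) : A ∈ subformulas C :=
  subformulas_subset_of_mem h (by simp [subformulas, mem_subformulas_self])

variable (A₀ : BForm)

def trace (x : Set BForm) : Set BForm × Prop := (x ∩ {B | B ∈ subformulas A₀}, IsGood x)

def Filtration : Type := {p : Set BForm × Prop // ∃ x, MaxConsistent LAx x ∧ p = trace A₀ x}

namespace Filtration

def point (x : Set BForm) (hx : MaxConsistent LAx x) : Filtration A₀ := ⟨trace A₀ x, x, hx, rfl⟩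

variable {A₀}

theorem exists_eq_point (w : Filtration A₀) : ∃ x hx, w = point A₀ x hx :=
  let ⟨x, hx, hw⟩ := w.2
  ⟨x, hx, Subtype.ext hw⟩

theorem fst_subset (w : Filtration A₀) : w.1.1 ⊆ {B | B ∈ subformulas A₀} := by
  obtain ⟨x, hx, rfl⟩ := w.exists_eq_point
  exact Set.inter_subset_right

instance : Finite (Filtration A₀) :=
  have : Finite (𝒫 {B | B ∈ subformulas A₀}) :=
    (subformulas A₀).finite_toSet.powerset.to_subtype
  .of_injective (fun w => ((⟨w.1.1, w.fst_subset⟩ : 𝒫 {B | B ∈ subformulas A₀}), w.1.2))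
    fun _ _ h => Subtype.ext (Prod.ext (congrArg (·.1.1) h) (congrArg (·.2) h))

variable (A₀)

/-- The second clause records goodness: plain filtration would not preserve the frame
condition `SeesEndpointCone`. -/
def rel (i : Fin 2) (w w' : Filtration A₀) : Prop :=
  (∀ B, box i B ∈ w.1.1 → box i B ∈ w'.1.1 ∧ B ∈ w'.1.1) ∧
  (w.1.2 → if i = 0 then w' = w else w'.1.2)

def val (n : ℕ) (w : Filtration A₀) : Prop := var n ∈ w.1.1

variable {A₀}

theorem rel_point_of_canonicalRel {x y : Set BForm} (hx : MaxConsistent LAx x)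
    (hy : MaxConsistent LAx y) (h : canonicalRel i x y) :
    rel A₀ i (point A₀ x hx) (point A₀ y hy) := by
  refine ⟨fun B hB => ⟨⟨canonicalRel_box i hx h hB.1, hB.2⟩, h B hB.1, mem_subformulas_of_box hB.2⟩,
    fun hg => ?_⟩
  match i with
  | 0 =>
    obtain rfl := IsGood.eq_of_canonicalRel_zero hx hg hy h
    rw [if_pos rfl]
  | 1 => exact IsGood.of_canonicalRel_one hx hg h

theorem rel_refl (i : Fin 2) (w : Filtration A₀) : rel A₀ i w w := by
  obtain ⟨x, hx, rfl⟩ := w.exists_eq_point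
  exact rel_point_of_canonicalRel hx hx (canonicalRel_refl i hx)

theorem rel_trans {w₁ w₂ w₃ : Filtration A₀} (h₁₂ : rel A₀ i w₁ w₂) (h₂₃ : rel A₀ i w₂ w₃) :
    rel A₀ i w₁ w₃ := by
  refine ⟨fun B hB => h₂₃.1 B (h₁₂.1 B hB).1, fun hg => ?_⟩
  have h₂ := h₁₂.2 hg
  split_ifs at h₂ ⊢ with hi
  · subst h₂
    simpa [hi] using h₂₃.2 hg
  · simpa [hi] using h₂₃.2 h₂

theorem seesEndpointCone : SeesEndpointCone (rel A₀) := by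
  intro w
  obtain ⟨x, hx, rfl⟩ := w.exists_eq_point
  obtain ⟨y, hy, hxy, hgood⟩ := hx.exists_canonicalRel_isGood
  refine ⟨point A₀ y hy, rel_point_of_canonicalRel hx hy hxy, fun z hz v hv => ?_⟩
  have hz_good : z.1.2 := by simpa using hz.2 hgood
  simpa using hv.2 hz_good

theorem valid_of_mem_LL (hB : B ∈ LL) : BValid (rel A₀) B :=
  BProv.valid (LAx_valid rel_refl (fun _ _ _ _ => rel_trans) seesEndpointCone) hB

theorem truth_lemma (hC : C ∈ subformulas A₀) {x : Set BForm} (hx : MaxConsistent LAx x) :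
    BSat (rel A₀) (val A₀) (point A₀ x hx) C ↔ C ∈ x := by
  induction C generalizing x with
  | var n => exact ⟨fun h => h.1, fun h => ⟨h, hC⟩⟩
  | bot => exact ⟨False.elim, fun h => hx.1 (.hyp h)⟩
  | imp C₁ C₂ ih₁ ih₂ =>
    exact (imp_congr (ih₁ (mem_subformulas_of_imp_left hC) hx)
      (ih₂ (mem_subformulas_of_imp_right hC) hx)).trans hx.imp_mem_iff.symm
  | box i C ih =>
    refine ⟨fun h => ?_, fun hbox w hw => ?_⟩
    · by_contra hbox
      obtain ⟨y, hy, hxy, hCy⟩ := hx.exists_canonicalRel_not_mem i hbox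
      exact hCy ((ih (mem_subformulas_of_box hC) hy).1 (h _ (rel_point_of_canonicalRel hx hy hxy)))
    · obtain ⟨y, hy, rfl⟩ := w.exists_eq_point
      exact (ih (mem_subformulas_of_box hC) hy).2 (hw.1 C ⟨hbox, hC⟩).2.1

end Filtration

end FiniteModel

/-- L = S4.1 ∗ S4 + ◇₁□₂(◇₁p → □₁p) has the finite model property:
it is the logic of the class of finite Kripke 2-frames validating L. -/
theorem LL_fmp :
    LL = {A : BForm | ∀ (W : Type) (R1 R2 : W → W → Prop), Nonempty W → Finite W →
      (∀ B ∈ LL, BValid ![R1, R2] B) → BValid ![R1, R2] A} := by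
  ext A
  refine ⟨fun hA W R1 R2 _ _ hval => hval A hA, fun hA => ?_⟩
  by_contra hnA
  obtain ⟨x, hx, hAx⟩ := exists_maxConsistent_not_mem hnA
  have hrel : ![Filtration.rel A 0, Filtration.rel A 1] = Filtration.rel A := by
    funext i
    fin_cases i <;> rfl
  have hvalid := hA (Filtration A) _ _ ⟨Filtration.point A x hx⟩ inferInstance
    (by rw [hrel]; exact fun B hB => Filtration.valid_of_mem_LL hB)
  rw [hrel] at hvalid
  exact hAx ((Filtration.truth_lemma (mem_subformulas_self A) hx).1 (hvalid _ _))
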